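/- Let A be a reduced commutative ring, B = A_m a localization at a maximal ideal, L = Q(B) the total ring of fractions of B, and B̂ the completion of the Noetherian local ring B. Suppose B → B̂ is faithfully flat and B injects into L. If f ∈ L ∩ B̂ (i.e. f is an element of the total fraction ring that also lies in the completion, inside L ⊗_B B̂), then f ∈ B. -/
import Mathlib


open scoped TensorProduct

/-- Let `A` be a reduced commutative ring, `B = A_m` its localization at a
maximal ideal `m`, assumed Noetherian and local, `L = Q(B)` the total ring of fractions of
`B`, and `B̂` the (maximal-adic) completion of `B`. Suppose `B → B̂` is faithfully flat and
`B` injects into `L`. If an element lies in `L ∩ B̂`, i.e. `f ∈ L` and `g ∈ B̂` have the same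
image in `L ⊗_B B̂`, then it lies in `B`: `f` is the image of an element of `B`. -/
theorem mem_of_mem_total_fraction_ring_and_completion
    (A : Type*) [CommRing A] [IsReduced A] (m : Ideal A) [m.IsMaximal]
    (B : Type*) [CommRing B] [IsNoetherianRing B] [IsLocalRing B]
    [Algebra A B] [IsLocalization.AtPrime B m]
    (L : Type*) [CommRing L] [Algebra B L] [IsLocalization (nonZeroDivisors B) L]
    [Module.FaithfullyFlat B (AdicCompletion (IsLocalRing.maximalIdeal B) B)]
    (hinj : Function.Injective (algebraMap B L))
    (f : L) (g : AdicCompletion (IsLocalRing.maximalIdeal B) B)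
    (hfg : (f ⊗ₜ[B] (1 : AdicCompletion (IsLocalRing.maximalIdeal B) B) :
        L ⊗[B] AdicCompletion (IsLocalRing.maximalIdeal B) B) = (1 : L) ⊗ₜ[B] g) :
    ∃ b : B, algebraMap B L b = f := by
  -- The submodule of `L` which is the image of `B`.
  set R : Submodule B L := LinearMap.range (Algebra.linearMap B L) with hR
  -- It suffices to show that the class of `f` in `L / B` is zero.
  suffices h : f ∈ R by
    obtain ⟨b, hb⟩ := h
    exact ⟨b, hb⟩
  rw [← Submodule.Quotient.mk_eq_zero R]
  -- Consider the `B`-linear map `B → L/B` sending `1` to the class of `f`.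
  have hz : LinearMap.toSpanSingleton B (L ⧸ R) (Submodule.Quotient.mk f) = 0 := by
    rw [Module.FaithfullyFlat.zero_iff_rTensor_zero B (AdicCompletion (IsLocalRing.maximalIdeal B) B)]
    apply TensorProduct.ext'
    intro b c
    have h1 : f ⊗ₜ[B] c = (1 : L) ⊗ₜ[B] (g * c) := by
      calc f ⊗ₜ[B] c = (f ⊗ₜ[B] (1 : AdicCompletion (IsLocalRing.maximalIdeal B) B)) * ((1 : L) ⊗ₜ[B] c) := by
            rw [Algebra.TensorProduct.tmul_mul_tmul, mul_one, one_mul]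
        _ = ((1 : L) ⊗ₜ[B] g) * ((1 : L) ⊗ₜ[B] c) := by rw [hfg]
        _ = (1 : L) ⊗ₜ[B] (g * c) := by
            rw [Algebra.TensorProduct.tmul_mul_tmul, mul_one]
    have h2 : (b • f) ⊗ₜ[B] c = (1 : L) ⊗ₜ[B] (b • (g * c)) := by
      rw [← TensorProduct.smul_tmul', h1, TensorProduct.smul_tmul', TensorProduct.smul_tmul]
    calc (LinearMap.rTensor (AdicCompletion (IsLocalRing.maximalIdeal B) B) (LinearMap.toSpanSingleton B (L ⧸ R)
            (Submodule.Quotient.mk f))) (b ⊗ₜ[B] c)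
        = (b • Submodule.Quotient.mk f : L ⧸ R) ⊗ₜ[B] c := by
          simp [LinearMap.rTensor_tmul]
      _ = (LinearMap.rTensor (AdicCompletion (IsLocalRing.maximalIdeal B) B) (R.mkQ)) ((b • f) ⊗ₜ[B] c) := by
          simp [LinearMap.rTensor_tmul, Submodule.Quotient.mk_smul]
      _ = (LinearMap.rTensor (AdicCompletion (IsLocalRing.maximalIdeal B) B) (R.mkQ)) ((1 : L) ⊗ₜ[B] (b • (g * c))) := by rw [h2]
      _ = (Submodule.Quotient.mk (1 : L) : L ⧸ R) ⊗ₜ[B] (b • (g * c)) := by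
          simp [LinearMap.rTensor_tmul]
      _ = 0 := by
          have : (Submodule.Quotient.mk (1 : L) : L ⧸ R) = 0 := by
            rw [Submodule.Quotient.mk_eq_zero]
            exact ⟨1, by simp⟩
          rw [this, TensorProduct.zero_tmul]
      _ = 0 := rfl
  simpa using congrArg (fun φ => φ 1) hz
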